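/- arXiv:2402.04051 — 5 statements merged into one kernel-verified Lean document; each statement's English description precedes it below -/
import Mathlib

section
/- Let U be an open convex subset of ℝ^d and let L : ℝ^d → ℝ be three times continuously differentiable on U with the third derivative bounded in norm by M ≥ 0 on U. Let θ_a, θ_b ∈ U with θ_a ≠ θ_b, set β = ‖θ_b − θ_a‖, μ = (θ_b − θ_a)/β, let ∇L(θ_a), ∇L(θ_b) be the gradients and H_a, H_b the Hessian matrices of L at θ_a and θ_b. Then the barrier B(θ_a, θ_b) satisfies | B(θ_a, θ_b) − max_{λ∈[0,1]} λ(1−λ)[ β μ·(∇L(θ_a) − ∇L(θ_b)) + (1/2) β² μ^⊤((1−λ)H_a + λH_b)μ ] | ≤ (M/6) β³. -/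
/-!
Write `x_λ = λθ_a + (1 − λ)θ_b`. Expanding `L` to second order around `θ_a` and around `θ_b`,
both evaluated at `x_λ`, with Lagrange remainders bounded by `M‖x_λ − θ_a‖³/6` and
`M‖x_λ − θ_b‖³/6`, and taking the convex combination with weights `λ` and `1 − λ`, the values
`L(θ_a)`, `L(θ_b)` cancel against the linear interpolation and what remains is exactly the
quadratic model `λ(1 − λ)[…]`. The error is at most
`(M/6)β³ (λ(1 − λ)³ + (1 − λ)λ³) ≤ (M/6)β³` for every `λ`, and a uniform bound between two
functions bounds the difference of their suprema.
-/

open scoped RealInnerProductSpace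

open Set

theorem csSup_image_le_csSup_image_add {α : Type*} {s : Set α} {f g : α → ℝ} {ε : ℝ}
    (hs : s.Nonempty) (hg : BddAbove (g '' s)) (h : ∀ x ∈ s, f x ≤ g x + ε) :
    sSup (f '' s) ≤ sSup (g '' s) + ε :=
  csSup_le (hs.image f) <| forall_mem_image.2 fun x hx =>
    (h x hx).trans (by gcongr; exact le_csSup hg (mem_image_of_mem g hx))

theorem abs_csSup_image_sub_csSup_image_le {α : Type*} {s : Set α} {f g : α → ℝ} {ε : ℝ}
    (hs : s.Nonempty) (hf : BddAbove (f '' s)) (hg : BddAbove (g '' s))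
    (h : ∀ x ∈ s, |f x - g x| ≤ ε) :
    |sSup (f '' s) - sSup (g '' s)| ≤ ε := by
  refine abs_sub_le_iff.2 ⟨?_, ?_⟩
  · have := csSup_image_le_csSup_image_add (f := f) hs hg fun x hx => by
      linarith [(abs_le.1 (h x hx)).2]
    linarith
  · have := csSup_image_le_csSup_image_add (f := g) hs hf fun x hx => by
      linarith [(abs_le.1 (h x hx)).1]
    linarith

theorem ContinuousMultilinearMap.apply_const_smul {𝕜 E G ι : Type*}
    [NontriviallyNormedField 𝕜] [NormedAddCommGroup E] [NormedSpace 𝕜 E]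
    [NormedAddCommGroup G] [NormedSpace 𝕜 G] [Fintype ι]
    (m : ContinuousMultilinearMap 𝕜 (fun _ : ι => E) G) (c : 𝕜) (w : E) :
    m (fun _ => c • w) = c ^ Fintype.card ι • m (fun _ => w) := by
  simpa using m.map_smul_univ (fun _ => c) (fun _ => w)

section Taylor

variable {E F : Type*} [NormedAddCommGroup E] [NormedSpace ℝ E]
  [NormedAddCommGroup F] [NormedSpace ℝ F]

theorem hasDerivAt_iteratedFDeriv_add_smul {f : E → F} {p v : E} {k : ℕ} {t : ℝ}
    (hf : ContDiffAt ℝ (k + 1) f (p + t • v)) :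
    HasDerivAt (fun s : ℝ => iteratedFDeriv ℝ k f (p + s • v) (fun _ => v))
      (iteratedFDeriv ℝ (k + 1) f (p + t • v) (fun _ => v)) t := by
  have hline : HasDerivAt (fun s : ℝ => p + s • v) v t := by
    simpa using ((hasDerivAt_id t).smul_const v).const_add p
  have hD : ContDiffAt ℝ 1 (iteratedFDeriv ℝ k f) (p + t • v) :=
    hf.iteratedFDeriv_right (by rw [add_comm])
  -- `iteratedFDeriv_succ_apply_left` holds definitionally, so no rewriting of the target is needed
  exact ((ContinuousMultilinearMap.apply ℝ _ F fun _ => v).hasFDerivAt.comp _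
    (hD.differentiableAt one_ne_zero).hasFDerivAt).comp_hasDerivAt t hline

theorem iteratedDerivWithin_comp_add_smul {f : E → F} {p v : E} {s : Set ℝ}
    (hs : UniqueDiffOn ℝ s) {n : ℕ} (hf : ∀ t ∈ s, ContDiffAt ℝ n f (p + t • v))
    {k : ℕ} (hk : k ≤ n) {t : ℝ} (ht : t ∈ s) :
    iteratedDerivWithin k (fun r => f (p + r • v)) s t =
      iteratedFDeriv ℝ k f (p + t • v) (fun _ => v) := by
  induction k generalizing t with
  | zero => simp
  | succ k ih =>
    rw [iteratedDerivWithin_succ,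
      derivWithin_congr (fun r hr => ih (by omega) hr) (ih (by omega) ht)]
    exact (hasDerivAt_iteratedFDeriv_add_smul ((hf t ht).of_le (by exact_mod_cast hk)))
      |>.hasDerivWithinAt.derivWithin (hs t ht)

theorem abs_sub_taylor_two_le {f : E → ℝ} {x y : E} {M : ℝ}
    (hf : ∀ z ∈ segment ℝ x y, ContDiffAt ℝ 3 f z)
    (hM : ∀ z ∈ segment ℝ x y, ‖iteratedFDeriv ℝ 3 f z‖ ≤ M) :
    |f y - f x - fderiv ℝ f x (y - x) - iteratedFDeriv ℝ 2 f x (fun _ => y - x) / 2|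
      ≤ M * ‖y - x‖ ^ 3 / 6 := by
  set g : ℝ → ℝ := fun r => f (x + r • (y - x))
  have hseg : ∀ r ∈ Icc (0 : ℝ) 1, x + r • (y - x) ∈ segment ℝ x y := fun r hr => by
    rw [segment_eq_image']; exact mem_image_of_mem _ hr
  have hs : UniqueDiffOn ℝ (Icc (0 : ℝ) 1) := uniqueDiffOn_Icc zero_lt_one
  have hfg : ∀ r ∈ Icc (0 : ℝ) 1, ContDiffAt ℝ 3 f (x + r • (y - x)) := fun r hr =>
    hf _ (hseg r hr)
  have hderiv : ∀ k ≤ 3, ∀ r ∈ Icc (0 : ℝ) 1, iteratedDerivWithin k g (Icc 0 1) r =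
      iteratedFDeriv ℝ k f (x + r • (y - x)) (fun _ => y - x) := fun k hk r hr =>
    iteratedDerivWithin_comp_add_smul hs hfg (by exact_mod_cast hk) hr
  have hg : ContDiffOn ℝ 3 g (Icc 0 1) := fun r hr =>
    ((hfg r hr).comp r (contDiffAt_const.add (contDiffAt_id.smul contDiffAt_const)))
      |>.contDiffWithinAt
  obtain ⟨r, hr, hrem⟩ := taylor_mean_remainder_lagrange (n := 2) zero_ne_one
    (by rw [uIcc_of_le zero_le_one]; exact hg.of_le (by norm_num))
    (by rw [uIcc_of_le zero_le_one, uIoo_of_le zero_le_one]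
        exact (hg.differentiableOn_iteratedDerivWithin (by norm_num) hs).mono
          Ioo_subset_Icc_self)
  simp only [uIcc_of_le zero_le_one, uIoo_of_le zero_le_one] at hr hrem
  have hr' : r ∈ Icc (0 : ℝ) 1 := Ioo_subset_Icc_self hr
  have h0 : ∀ k ≤ 3, iteratedDerivWithin k g (Icc 0 1) 0 =
      iteratedFDeriv ℝ k f x (fun _ => y - x) := fun k hk => by
    simpa using hderiv k hk 0 (left_mem_Icc.2 zero_le_one)
  norm_num [taylor_within_apply, Finset.sum_range_succ, h0, hderiv 3 le_rfl r hr', g,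
    Nat.factorial] at hrem
  calc _ = |iteratedFDeriv ℝ 3 f (x + r • (y - x)) (fun _ => y - x) / 6| := by
        rw [map_sub]; congr 1; linarith
    _ ≤ M * ‖y - x‖ ^ 3 / 6 := by
        rw [abs_div, abs_of_pos (by norm_num : (0 : ℝ) < 6)]
        gcongr
        simpa [Finset.prod_const] using
          ContinuousMultilinearMap.le_of_opNorm_le (hM _ (hseg r hr')) fun _ : Fin 3 => y - x

theorem abs_interpolationGap_sub_le {f : E → ℝ} {a b : E} {M l : ℝ} (hl : l ∈ Icc (0 : ℝ) 1)
    (hf : ∀ z ∈ segment ℝ a b, ContDiffAt ℝ 3 f z)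
    (hM : ∀ z ∈ segment ℝ a b, ‖iteratedFDeriv ℝ 3 f z‖ ≤ M) :
    |f (l • a + (1 - l) • b) - (l * f a + (1 - l) * f b)
      - l * (1 - l) * (fderiv ℝ f a (b - a) - fderiv ℝ f b (b - a)
        + ((1 - l) * iteratedFDeriv ℝ 2 f a (fun _ => b - a)
          + l * iteratedFDeriv ℝ 2 f b (fun _ => b - a)) / 2)|
      ≤ M * ‖b - a‖ ^ 3 / 6 := by
  obtain ⟨hl0, hl1⟩ := hl
  set x := l • a + (1 - l) • b
  have hx : x ∈ segment ℝ a b := ⟨l, 1 - l, hl0, by linarith, by ring, rfl⟩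
  have hxa : x - a = (1 - l) • (b - a) := by module
  have hxb : x - b = (-l) • (b - a) := by module
  have hsega := (convex_segment a b).segment_subset (left_mem_segment ℝ a b) hx
  have hsegb := (convex_segment a b).segment_subset (right_mem_segment ℝ a b) hx
  have ha := abs_sub_taylor_two_le (fun z hz => hf z (hsega hz)) (fun z hz => hM z (hsega hz))
  have hb := abs_sub_taylor_two_le (fun z hz => hf z (hsegb hz)) (fun z hz => hM z (hsegb hz))
  simp only [hxa, hxb, map_smul, ContinuousMultilinearMap.apply_const_smul, norm_smul,
    smul_eq_mul, Fintype.card_fin, Real.norm_eq_abs, abs_neg, abs_of_nonneg hl0,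
    abs_of_nonneg (sub_nonneg.2 hl1)] at ha hb
  have hM0 : 0 ≤ M := (norm_nonneg _).trans (hM a (left_mem_segment ℝ a b))
  set A := f x - f a - (1 - l) * fderiv ℝ f a (b - a)
    - (1 - l) ^ 2 * iteratedFDeriv ℝ 2 f a (fun _ => b - a) / 2
  set B := f x - f b - -l * fderiv ℝ f b (b - a)
    - (-l) ^ 2 * iteratedFDeriv ℝ 2 f b (fun _ => b - a) / 2
  calc _ = |l * A + (1 - l) * B| := by congr 1; ring
    _ ≤ l * |A| + (1 - l) * |B| := by
        refine (abs_add_le _ _).trans_eq ?_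
        rw [abs_mul, abs_mul, abs_of_nonneg hl0, abs_of_nonneg (sub_nonneg.2 hl1)]
    _ ≤ l * (M * ((1 - l) * ‖b - a‖) ^ 3 / 6) + (1 - l) * (M * (l * ‖b - a‖) ^ 3 / 6) := by
        gcongr
    _ = M * ‖b - a‖ ^ 3 / 6 * (l * (1 - l) * ((1 - l) ^ 2 + l ^ 2)) := by ring
    _ ≤ M * ‖b - a‖ ^ 3 / 6 := by
        refine mul_le_of_le_one_right (by positivity) ?_
        nlinarith [mul_nonneg hl0 (sub_nonneg.2 hl1)]

end Taylor

theorem stmt0_general {d : ℕ} (U : Set (EuclideanSpace ℝ (Fin d)))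
    (hUopen : IsOpen U) (hUconv : Convex ℝ U)
    (L : EuclideanSpace ℝ (Fin d) → ℝ) (M : ℝ)
    (hL : ContDiffOn ℝ 3 L U)
    (hbd : ∀ x ∈ U, ‖iteratedFDerivWithin ℝ 3 L U x‖ ≤ M)
    (θa θb : EuclideanSpace ℝ (Fin d)) (ha : θa ∈ U) (hb : θb ∈ U)
    (β : ℝ) (hβ : β = ‖θb - θa‖)
    (μ : EuclideanSpace ℝ (Fin d)) (hμ : μ = β⁻¹ • (θb - θa)) :
    |sSup ((fun lam : ℝ =>
          L (lam • θa + (1 - lam) • θb) - (lam * L θa + (1 - lam) * L θb)) '' Set.Icc 0 1)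
      - sSup ((fun lam : ℝ => lam * (1 - lam) *
          (β * ⟪μ, gradient L θa - gradient L θb⟫
            + (1 / 2) * β ^ 2 *
              ((1 - lam) * (iteratedFDeriv ℝ 2 L θa ![μ, μ])
                + lam * (iteratedFDeriv ℝ 2 L θb ![μ, μ])))) '' Set.Icc 0 1)|
      ≤ M / 6 * β ^ 3 := by
  have hseg : segment ℝ θa θb ⊆ U := hUconv.segment_subset ha hb
  have hβμ : β • μ = θb - θa := by
    rcases eq_or_ne (θb - θa) 0 with h | h
    · simp [hβ, hμ, h]
    · rw [hμ, hβ, smul_inv_smul₀ (norm_ne_zero_iff.2 h)]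
  have hgrad (x : EuclideanSpace ℝ (Fin d)) :
      fderiv ℝ L x (θb - θa) = β * ⟪μ, gradient L x⟫ := by
    rw [← hβμ, map_smul, smul_eq_mul, real_inner_comm, ← InnerProductSpace.toDual_apply_apply,
      toDual_gradient]
  have hhess (x : EuclideanSpace ℝ (Fin d)) :
      iteratedFDeriv ℝ 2 L x (fun _ => θb - θa) = β ^ 2 * iteratedFDeriv ℝ 2 L x ![μ, μ] := by
    rw [← hβμ, ContinuousMultilinearMap.apply_const_smul, Matrix.vec_single_eq_const,
      Matrix.vecCons_const, Fintype.card_fin, smul_eq_mul]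
  have hpt (l : ℝ) (hl : l ∈ Icc (0 : ℝ) 1) := abs_interpolationGap_sub_le (f := L) (a := θa) hl
    (fun z hz => hL.contDiffAt (hUopen.mem_nhds (hseg hz)))
    fun z hz => by
      rw [← iteratedFDerivWithin_of_isOpen 3 hUopen (hseg hz)]; exact hbd z (hseg hz)
  have hF : ContinuousOn (fun l : ℝ => L (l • θa + (1 - l) • θb)) (Icc 0 1) :=
    hL.continuousOn.comp (by fun_prop) fun l hl =>
      hseg ⟨l, 1 - l, hl.1, by linarith [hl.2], by ring, rfl⟩
  refine abs_csSup_image_sub_csSup_image_le (nonempty_Icc.2 zero_le_one)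
    (isCompact_Icc.image_of_continuousOn (hF.sub (by fun_prop))).bddAbove
    (isCompact_Icc.image_of_continuousOn (by fun_prop)).bddAbove fun l hl => ?_
  convert hpt l hl using 1
  · rw [hgrad, hgrad, hhess, hhess, inner_sub_right]; ring_nf
  · rw [← hβ]; ring

/-- Let `U ⊆ ℝ^d` be open and convex, `L` three times continuously
differentiable on `U` with `‖D³L‖ ≤ M` on `U`, and `θ_a ≠ θ_b ∈ U`. With
`β = ‖θ_b − θ_a‖`, `μ = (θ_b − θ_a)/β`, the barrier
`B(θ_a, θ_b) = max_{λ∈[0,1]} (L(λθ_a + (1−λ)θ_b) − λ L(θ_a) − (1−λ) L(θ_b))`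
satisfies
`|B(θ_a,θ_b) − max_{λ∈[0,1]} λ(1−λ)[β μ·(∇L(θ_a) − ∇L(θ_b))
   + ½β² μᵀ((1−λ)H_a + λH_b)μ]| ≤ (M/6) β³`,
where the Hessian quadratic forms `μᵀ H μ` are expressed via the second iterated
derivative applied to `(μ, μ)`. -/
theorem stmt0 {d : ℕ} (U : Set (EuclideanSpace ℝ (Fin d)))
    (hUopen : IsOpen U) (hUconv : Convex ℝ U)
    (L : EuclideanSpace ℝ (Fin d) → ℝ) (M : ℝ) (hM : 0 ≤ M)
    (hL : ContDiffOn ℝ 3 L U)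
    (hbd : ∀ x ∈ U, ‖iteratedFDerivWithin ℝ 3 L U x‖ ≤ M)
    (θa θb : EuclideanSpace ℝ (Fin d)) (ha : θa ∈ U) (hb : θb ∈ U) (hab : θa ≠ θb)
    (β : ℝ) (hβ : β = ‖θb - θa‖)
    (μ : EuclideanSpace ℝ (Fin d)) (hμ : μ = β⁻¹ • (θb - θa)) :
    |sSup ((fun lam : ℝ =>
          L (lam • θa + (1 - lam) • θb) - (lam * L θa + (1 - lam) * L θb)) '' Set.Icc 0 1)
      - sSup ((fun lam : ℝ => lam * (1 - lam) *
          (β * ⟪μ, gradient L θa - gradient L θb⟫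
            + (1 / 2) * β ^ 2 *
              ((1 - lam) * (iteratedFDeriv ℝ 2 L θa ![μ, μ])
                + lam * (iteratedFDeriv ℝ 2 L θb ![μ, μ])))) '' Set.Icc 0 1)|
      ≤ M / 6 * β ^ 3 :=
  stmt0_general U hUopen hUconv L M hL hbd θa θb ha hb β hβ μ hμ
end

section
/- Let (Ω, μ) be a probability space and z : Ω → ℝ^n a measurable random vector with E‖z‖² < ∞. Let σ : ℝ → ℝ be Lipschitz continuous with constant C > 0, applied to vectors coordinatewise. Let W_a = Σ_{i=1}^{r} s_i u_i v_i^⊤ and W_b = Σ_{j=1}^{r'} t_j u'_j (v'_j)^⊤ be m×n real matrices, where (u_i)_{i=1}^{r} and (u'_j)_{j=1}^{r'} are orthonormal families in ℝ^m, s_i, t_j ∈ ℝ, and v_i, v'_j ∈ ℝ^n. Then E‖σ(W_a z) − σ(W_b z)‖ ≤ C ( Σ_{i=1}^{r} s_i² E((v_i·z)²) + Σ_{j=1}^{r'} t_j² E((v'_j·z)²) − 2 Σ_{i=1}^{r} Σ_{j=1}^{r'} s_i t_j (u_i·u'_j) E((v_i·z)(v'_j·z)) )^{1/2}. -/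
/-!
Writing `W_a z = Σ a_i u_i` and `W_b z = Σ b_j u'_j` with `a_i = s_i (v_i·z)`, `b_j = t_j (v'_j·z)`,
orthonormality turns `‖W_a z − W_b z‖²` into the quadratic form `F` inside the square root.
Coordinatewise Lipschitz continuity gives `‖σ(W_a z) − σ(W_b z)‖ ≤ C √F`, Jensen's inequality
gives `E √F ≤ √(E F)`, and `E F` is the stated expression by linearity, every term being
integrable because `z` has finite second moment.
-/

open Matrix MeasureTheory

theorem sum_smul_vecMulVec_mulVec {R ι m n : Type*} [CommSemiring R] [Fintype ι] [Fintype n]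
    (s : ι → R) (u : ι → m → R) (v : ι → n → R) (x : n → R) :
    (∑ i, s i • vecMulVec (u i) (v i)) *ᵥ x = ∑ i, (s i * (v i ⬝ᵥ x)) • u i := by
  simp [Matrix.sum_mulVec, smul_mulVec, vecMulVec_mulVec, mul_smul]

theorem sum_smul_dotProduct_sum_smul {R ι κ m : Type*} [CommSemiring R] [Fintype ι]
    [Fintype κ] [Fintype m] (u : ι → m → R) (u' : κ → m → R) (a : ι → R) (b : κ → R) :
    (∑ i, a i • u i) ⬝ᵥ (∑ j, b j • u' j) = ∑ i, ∑ j, a i * b j * (u i ⬝ᵥ u' j) := by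
  simp_rw [sum_dotProduct, dotProduct_sum, smul_dotProduct, dotProduct_smul, smul_eq_mul,
    mul_assoc]

theorem dotProduct_self_sub_sum_smul_of_orthonormal {R ι κ m : Type*} [CommRing R] [Fintype ι]
    [Fintype κ] [Fintype m] [DecidableEq ι] [DecidableEq κ]
    {u : ι → m → R} {u' : κ → m → R}
    (hu : ∀ i j, u i ⬝ᵥ u j = if i = j then 1 else 0)
    (hu' : ∀ i j, u' i ⬝ᵥ u' j = if i = j then 1 else 0) (a : ι → R) (b : κ → R) :
    (∑ i, a i • u i - ∑ j, b j • u' j) ⬝ᵥ (∑ i, a i • u i - ∑ j, b j • u' j)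
      = ∑ i, a i ^ 2 + ∑ j, b j ^ 2 - 2 * ∑ i, ∑ j, a i * b j * (u i ⬝ᵥ u' j) := by
  rw [sub_dotProduct, dotProduct_sub, dotProduct_sub, dotProduct_comm (∑ j, b j • u' j)]
  simp only [sum_smul_dotProduct_sum_smul, hu, hu', mul_ite, mul_one, mul_zero,
    Finset.sum_ite_eq, Finset.mem_univ, if_true, ← sq]
  ring

theorem sum_sq_sub_mulVec_of_orthonormal {R ι κ m n : Type*} [CommRing R] [Fintype ι]
    [Fintype κ] [Fintype m] [Fintype n] [DecidableEq ι] [DecidableEq κ]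
    {u : ι → m → R} {u' : κ → m → R}
    (hu : ∀ i j, u i ⬝ᵥ u j = if i = j then 1 else 0)
    (hu' : ∀ i j, u' i ⬝ᵥ u' j = if i = j then 1 else 0)
    (s : ι → R) (t : κ → R) (v : ι → n → R) (v' : κ → n → R) (x : n → R) :
    ∑ k, (((∑ i, s i • vecMulVec (u i) (v i)) *ᵥ x) k
        - ((∑ j, t j • vecMulVec (u' j) (v' j)) *ᵥ x) k) ^ 2
      = ∑ i, s i ^ 2 * (v i ⬝ᵥ x) ^ 2 + ∑ j, t j ^ 2 * (v' j ⬝ᵥ x) ^ 2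
        - 2 * ∑ i, ∑ j, s i * t j * (u i ⬝ᵥ u' j) * ((v i ⬝ᵥ x) * (v' j ⬝ᵥ x)) := by
  have hsq : ∀ w w' : m → R, ∑ k, (w k - w' k) ^ 2 = (w - w') ⬝ᵥ (w - w') := fun w w' => by
    simp [dotProduct, sq]
  rw [hsq]
  simp_rw [sum_smul_vecMulVec_mulVec,
    dotProduct_self_sub_sum_smul_of_orthonormal hu hu', mul_pow]
  congr 2
  exact Finset.sum_congr rfl fun i _ => Finset.sum_congr rfl fun j _ => by ring

section SecondMoments

variable {Ω : Type*} [MeasurableSpace Ω] {μ : Measure Ω}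

theorem memLp_two_sqrt {f : Ω → ℝ} (hf0 : 0 ≤ᵐ[μ] f) (hf : Integrable f μ) :
    MemLp (fun ω => √(f ω)) 2 μ :=
  (memLp_two_iff_integrable_sq
    (Real.continuous_sqrt.comp_aestronglyMeasurable hf.aestronglyMeasurable)).2 <|
    hf.congr <| hf0.mono fun _ h => (Real.sq_sqrt h).symm

theorem integral_sqrt_le_sqrt_integral [IsProbabilityMeasure μ] {f : Ω → ℝ}
    (hf0 : 0 ≤ᵐ[μ] f) (hf : Integrable f μ) :
    ∫ ω, √(f ω) ∂μ ≤ √(∫ ω, f ω ∂μ) := by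
  -- Jensen for the concave `√`, in the form `Var[√f] ≥ 0`.
  have hvar := ProbabilityTheory.variance_eq_sub (memLp_two_sqrt hf0 hf)
  have hsq : ∫ ω, ((fun ω => √(f ω)) ^ 2) ω ∂μ = ∫ ω, f ω ∂μ :=
    integral_congr_ae <| hf0.mono fun _ h => Real.sq_sqrt h
  rw [hsq] at hvar
  refine (le_abs_self _).trans (Real.abs_le_sqrt ?_)
  linarith [ProbabilityTheory.variance_nonneg (fun ω => √(f ω)) μ]

variable {ι : Type*} [Fintype ι] {z : Ω → ι → ℝ}

theorem memLp_two_apply_of_integrable_sum_sq (hz : AEStronglyMeasurable z μ)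
    (hz2 : Integrable (fun ω => ∑ i, z ω i ^ 2) μ) (i : ι) :
    MemLp (fun ω => z ω i) 2 μ := by
  have hzi : AEStronglyMeasurable (fun ω => z ω i) μ :=
    (continuous_apply i).comp_aestronglyMeasurable hz
  refine (memLp_two_iff_integrable_sq hzi).2 <| hz2.mono' (hzi.pow 2) <| ae_of_all _ fun ω => ?_
  rw [Real.norm_of_nonneg (sq_nonneg _)]
  exact Finset.single_le_sum (fun j _ => sq_nonneg (z ω j)) (Finset.mem_univ i)

theorem memLp_two_dotProduct (hz : AEStronglyMeasurable z μ)
    (hz2 : Integrable (fun ω => ∑ i, z ω i ^ 2) μ) (p : ι → ℝ) :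
    MemLp (fun ω => p ⬝ᵥ z ω) 2 μ :=
  memLp_finsetSum _ fun i _ => (memLp_two_apply_of_integrable_sum_sq hz hz2 i).const_mul (p i)

theorem integrable_dotProduct_mul_dotProduct (hz : AEStronglyMeasurable z μ)
    (hz2 : Integrable (fun ω => ∑ i, z ω i ^ 2) μ) (p q : ι → ℝ) :
    Integrable (fun ω => (p ⬝ᵥ z ω) * (q ⬝ᵥ z ω)) μ :=
  (memLp_two_dotProduct hz hz2 p).integrable_mul (memLp_two_dotProduct hz hz2 q)

end SecondMoments

theorem nonneg_of_abs_sub_le_mul_abs_sub {σ : ℝ → ℝ} {C : ℝ}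
    (hσ : ∀ x y : ℝ, |σ x - σ y| ≤ C * |x - y|) : 0 ≤ C := by
  simpa using (abs_nonneg _).trans (hσ 1 0)

theorem sqrt_sum_sq_sub_comp_le {ι : Type*} [Fintype ι] {σ : ℝ → ℝ} {C : ℝ}
    (hσ : ∀ x y : ℝ, |σ x - σ y| ≤ C * |x - y|) (x y : ι → ℝ) :
    √(∑ k, (σ (x k) - σ (y k)) ^ 2) ≤ C * √(∑ k, (x k - y k) ^ 2) := by
  have hC := nonneg_of_abs_sub_le_mul_abs_sub hσ
  have hsq : ∑ k, (σ (x k) - σ (y k)) ^ 2 ≤ C ^ 2 * ∑ k, (x k - y k) ^ 2 := by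
    rw [Finset.mul_sum]
    refine Finset.sum_le_sum fun k _ => ?_
    rw [← sq_abs, ← sq_abs (x k - y k), ← mul_pow]
    exact pow_le_pow_left₀ (abs_nonneg _) (hσ _ _) 2
  calc √(∑ k, (σ (x k) - σ (y k)) ^ 2) ≤ √(C ^ 2 * ∑ k, (x k - y k) ^ 2) := Real.sqrt_le_sqrt hsq
    _ = C * √(∑ k, (x k - y k) ^ 2) := by rw [Real.sqrt_mul (sq_nonneg C), Real.sqrt_sq hC]

theorem stmt4_general {Ω : Type*} [MeasurableSpace Ω] (μ : Measure Ω) [IsProbabilityMeasure μ]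
    {n m r r' : ℕ} (z : Ω → Fin n → ℝ) (hz : Measurable z)
    (hz2 : Integrable (fun ω => ∑ i, (z ω i) ^ 2) μ)
    (σ : ℝ → ℝ) (C : ℝ)
    (hσ : ∀ x y : ℝ, |σ x - σ y| ≤ C * |x - y|)
    (s : Fin r → ℝ) (t : Fin r' → ℝ)
    (u : Fin r → Fin m → ℝ) (u' : Fin r' → Fin m → ℝ)
    (v : Fin r → Fin n → ℝ) (v' : Fin r' → Fin n → ℝ)
    (hu : ∀ i j, u i ⬝ᵥ u j = if i = j then 1 else 0)
    (hu' : ∀ i j, u' i ⬝ᵥ u' j = if i = j then 1 else 0)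
    (Wa Wb : Matrix (Fin m) (Fin n) ℝ)
    (hWa : Wa = ∑ i, s i • vecMulVec (u i) (v i))
    (hWb : Wb = ∑ j, t j • vecMulVec (u' j) (v' j)) :
    ∫ ω, Real.sqrt (∑ k, (σ ((Wa *ᵥ z ω) k) - σ ((Wb *ᵥ z ω) k)) ^ 2) ∂μ
      ≤ C * Real.sqrt
          ((∑ i, (s i) ^ 2 * ∫ ω, (v i ⬝ᵥ z ω) ^ 2 ∂μ)
            + (∑ j, (t j) ^ 2 * ∫ ω, (v' j ⬝ᵥ z ω) ^ 2 ∂μ)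
            - 2 * ∑ i, ∑ j, s i * t j * (u i ⬝ᵥ u' j)
                * ∫ ω, (v i ⬝ᵥ z ω) * (v' j ⬝ᵥ z ω) ∂μ) := by
  subst hWa hWb
  set F : Ω → ℝ := fun ω => ∑ k, (((∑ i, s i • vecMulVec (u i) (v i)) *ᵥ z ω) k
    - ((∑ j, t j • vecMulVec (u' j) (v' j)) *ᵥ z ω) k) ^ 2 with hF
  have hF0 : 0 ≤ᵐ[μ] F := ae_of_all _ fun ω => by positivity
  have hsq (p : Fin n → ℝ) := (memLp_two_dotProduct hz.aestronglyMeasurable hz2 p).integrable_sq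
  have hmul := integrable_dotProduct_mul_dotProduct hz.aestronglyMeasurable hz2
  simp_rw [sum_sq_sub_mulVec_of_orthonormal hu hu'] at hF
  have hFint : Integrable F μ := by rw [hF]; fun_prop
  have hEF : ∫ ω, F ω ∂μ = (∑ i, (s i) ^ 2 * ∫ ω, (v i ⬝ᵥ z ω) ^ 2 ∂μ)
            + (∑ j, (t j) ^ 2 * ∫ ω, (v' j ⬝ᵥ z ω) ^ 2 ∂μ)
            - 2 * ∑ i, ∑ j, s i * t j * (u i ⬝ᵥ u' j)
                * ∫ ω, (v i ⬝ᵥ z ω) * (v' j ⬝ᵥ z ω) ∂μ := by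
    rw [hF, integral_sub (by fun_prop) (by fun_prop), integral_add (by fun_prop) (by fun_prop)]
    simp (disch := fun_prop) only [integral_finsetSum, integral_const_mul]
  calc _ ≤ ∫ ω, C * √(F ω) ∂μ :=
        integral_mono_of_nonneg (ae_of_all _ fun _ => Real.sqrt_nonneg _)
          ((memLp_two_sqrt hF0 hFint).integrable one_le_two |>.const_mul C)
          (ae_of_all _ fun ω => sqrt_sum_sq_sub_comp_le hσ _ _)
    _ = C * ∫ ω, √(F ω) ∂μ := integral_const_mul _ _
    _ ≤ C * √(∫ ω, F ω ∂μ) := by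
        gcongr
        · exact nonneg_of_abs_sub_le_mul_abs_sub hσ
        · exact integral_sqrt_le_sqrt_integral hF0 hFint
    _ = _ := by rw [hEF]

/-- For a random vector `z` with `E‖z‖² < ∞`, a coordinatewise Lipschitz `σ`
with constant `C > 0`, and matrices `W_a = Σ_i s_i u_i v_iᵀ`, `W_b = Σ_j t_j u'_j v'_jᵀ`
with `(u_i)`, `(u'_j)` orthonormal,
`E‖σ(W_a z) − σ(W_b z)‖ ≤ C (Σ_i s_i² E(v_i·z)² + Σ_j t_j² E(v'_j·z)²
  − 2 Σ_{i,j} s_i t_j (u_i·u'_j) E((v_i·z)(v'_j·z)))^{1/2}`. -/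
theorem stmt4 {Ω : Type*} [MeasurableSpace Ω] (μ : Measure Ω) [IsProbabilityMeasure μ]
    {n m r r' : ℕ} (z : Ω → Fin n → ℝ) (hz : Measurable z)
    (hz2 : Integrable (fun ω => ∑ i, (z ω i) ^ 2) μ)
    (σ : ℝ → ℝ) (C : ℝ) (hC : 0 < C)
    (hσ : ∀ x y : ℝ, |σ x - σ y| ≤ C * |x - y|)
    (s : Fin r → ℝ) (t : Fin r' → ℝ)
    (u : Fin r → Fin m → ℝ) (u' : Fin r' → Fin m → ℝ)
    (v : Fin r → Fin n → ℝ) (v' : Fin r' → Fin n → ℝ)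
    (hu : ∀ i j, u i ⬝ᵥ u j = if i = j then 1 else 0)
    (hu' : ∀ i j, u' i ⬝ᵥ u' j = if i = j then 1 else 0)
    (Wa Wb : Matrix (Fin m) (Fin n) ℝ)
    (hWa : Wa = ∑ i, s i • vecMulVec (u i) (v i))
    (hWb : Wb = ∑ j, t j • vecMulVec (u' j) (v' j)) :
    ∫ ω, Real.sqrt (∑ k, (σ ((Wa *ᵥ z ω) k) - σ ((Wb *ᵥ z ω) k)) ^ 2) ∂μ
      ≤ C * Real.sqrt
          ((∑ i, (s i) ^ 2 * ∫ ω, (v i ⬝ᵥ z ω) ^ 2 ∂μ)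
            + (∑ j, (t j) ^ 2 * ∫ ω, (v' j ⬝ᵥ z ω) ^ 2 ∂μ)
            - 2 * ∑ i, ∑ j, s i * t j * (u i ⬝ᵥ u' j)
                * ∫ ω, (v i ⬝ᵥ z ω) * (v' j ⬝ᵥ z ω) ∂μ) :=
  stmt4_general μ z hz hz2 σ C hσ s t u u' v v' hu hu' Wa Wb hWa hWb
end

section
/- Let (u_i)_{i=1}^{n} and (u'_j)_{j=1}^{n} be orthonormal families in ℝ^{m}, let (v_i)_{i=1}^{n} and (v'_j)_{j=1}^{n} be orthonormal families in ℝ^{m'}, and let P ∈ ℝ^{m×m} and Q ∈ ℝ^{m'×m'} be orthogonal matrices. Then | Σ_{i=1}^{n} Σ_{j=1}^{n} (u_i^⊤ P u'_j)(v_i^⊤ Q v'_j) | ≤ n. -/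
open Matrix

lemma aux_dp_sum {n m : ℕ} (x : Fin m → ℝ) (f : Fin n → Fin m → ℝ) :
    x ⬝ᵥ (∑ j, f j) = ∑ j, x ⬝ᵥ f j := by
  simp only [dotProduct, Finset.sum_apply, Finset.mul_sum]
  exact Finset.sum_comm

lemma aux_sum_dp {n m : ℕ} (x : Fin m → ℝ) (f : Fin n → Fin m → ℝ) :
    (∑ j, f j) ⬝ᵥ x = ∑ j, f j ⬝ᵥ x := by
  simp only [dotProduct, Finset.sum_apply, Finset.sum_mul]
  exact Finset.sum_comm

lemma aux_ortho_dot {m : ℕ} (P : Matrix (Fin m) (Fin m) ℝ) (hP : Pᵀ * P = 1)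
    (x y : Fin m → ℝ) : (P *ᵥ x) ⬝ᵥ (P *ᵥ y) = x ⬝ᵥ y := by
  rw [dotProduct_comm, dotProduct_mulVec, vecMul_mulVec, hP, vecMul_one, dotProduct_comm]

lemma aux_bessel {n m : ℕ} (w : Fin n → Fin m → ℝ)
    (hw : ∀ i j, w i ⬝ᵥ w j = if i = j then 1 else 0) (x : Fin m → ℝ) :
    ∑ j, (x ⬝ᵥ w j) ^ 2 ≤ x ⬝ᵥ x := by
  have h0 : 0 ≤ (x - ∑ j, (x ⬝ᵥ w j) • w j) ⬝ᵥ (x - ∑ j, (x ⬝ᵥ w j) • w j) :=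
    Finset.sum_nonneg fun i _ => mul_self_nonneg _
  have hexp : (x - ∑ j, (x ⬝ᵥ w j) • w j) ⬝ᵥ (x - ∑ j, (x ⬝ᵥ w j) • w j)
      = x ⬝ᵥ x - ∑ j, (x ⬝ᵥ w j) ^ 2 := by
    have hc : ∀ j : Fin n, w j ⬝ᵥ x = x ⬝ᵥ w j := fun j => dotProduct_comm _ _
    simp only [sub_dotProduct, dotProduct_sub, aux_dp_sum, aux_sum_dp,
      smul_dotProduct, dotProduct_smul, smul_eq_mul, hw, hc, mul_ite, mul_one, mul_zero,
      Finset.sum_ite_eq, Finset.sum_ite_eq', Finset.mem_univ, if_true]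
    rw [Finset.sum_congr rfl (fun j _ => by ring : ∀ j ∈ Finset.univ,
      x ⬝ᵥ w j * (x ⬝ᵥ w j) = (x ⬝ᵥ w j) ^ 2)]
    ring
  linarith [h0, hexp ▸ h0]

/-- For orthonormal families `(u_i)`, `(u'_j)` in ℝ^m and `(v_i)`, `(v'_j)` in
ℝ^{m'}, and orthogonal matrices `P`, `Q`,
`|Σ_{i,j} (u_iᵀ P u'_j)(v_iᵀ Q v'_j)| ≤ n`. -/
theorem stmt9 {m m' n : ℕ}
    (u u' : Fin n → Fin m → ℝ) (v v' : Fin n → Fin m' → ℝ)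
    (hu : ∀ i j, u i ⬝ᵥ u j = if i = j then 1 else 0)
    (hu' : ∀ i j, u' i ⬝ᵥ u' j = if i = j then 1 else 0)
    (hv : ∀ i j, v i ⬝ᵥ v j = if i = j then 1 else 0)
    (hv' : ∀ i j, v' i ⬝ᵥ v' j = if i = j then 1 else 0)
    (P : Matrix (Fin m) (Fin m) ℝ) (Q : Matrix (Fin m') (Fin m') ℝ)
    (hP : Pᵀ * P = 1) (hQ : Qᵀ * Q = 1) :
    |∑ i, ∑ j, (u i ⬝ᵥ (P *ᵥ u' j)) * (v i ⬝ᵥ (Q *ᵥ v' j))| ≤ (n : ℝ) := by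
  have hPu : ∀ i j, (P *ᵥ u' i) ⬝ᵥ (P *ᵥ u' j) = if i = j then 1 else 0 := by
    intro i j; rw [aux_ortho_dot P hP, hu']
  have hQv : ∀ i j, (Q *ᵥ v' i) ⬝ᵥ (Q *ᵥ v' j) = if i = j then 1 else 0 := by
    intro i j; rw [aux_ortho_dot Q hQ, hv']
  have key : ∀ i : Fin n, |∑ j, (u i ⬝ᵥ (P *ᵥ u' j)) * (v i ⬝ᵥ (Q *ᵥ v' j))| ≤ 1 := by
    intro i
    rw [← sq_le_one_iff_abs_le_one]
    have ha : ∑ j, (u i ⬝ᵥ (P *ᵥ u' j)) ^ 2 ≤ 1 := by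
      have := aux_bessel (fun j => P *ᵥ u' j) hPu (u i)
      simpa [hu i i] using this
    have hb : ∑ j, (v i ⬝ᵥ (Q *ᵥ v' j)) ^ 2 ≤ 1 := by
      have := aux_bessel (fun j => Q *ᵥ v' j) hQv (v i)
      simpa [hv i i] using this
    calc (∑ j, (u i ⬝ᵥ (P *ᵥ u' j)) * (v i ⬝ᵥ (Q *ᵥ v' j))) ^ 2
        ≤ (∑ j, (u i ⬝ᵥ (P *ᵥ u' j)) ^ 2) * (∑ j, (v i ⬝ᵥ (Q *ᵥ v' j)) ^ 2) :=
          Finset.sum_mul_sq_le_sq_mul_sq _ _ _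
      _ ≤ 1 * 1 := by
          apply mul_le_mul ha hb (Finset.sum_nonneg fun j _ => sq_nonneg _)
          exact zero_le_one
      _ = 1 := by ring
  calc |∑ i, ∑ j, (u i ⬝ᵥ (P *ᵥ u' j)) * (v i ⬝ᵥ (Q *ᵥ v' j))|
      ≤ ∑ i, |∑ j, (u i ⬝ᵥ (P *ᵥ u' j)) * (v i ⬝ᵥ (Q *ᵥ v' j))| :=
        Finset.abs_sum_le_sum_abs _ _
    _ ≤ ∑ _i : Fin n, (1 : ℝ) := Finset.sum_le_sum fun i _ => key i
    _ = n := by simp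
end

section
/- Let (u_i)_{i=1}^{n} and (u'_j)_{j=1}^{n'} be orthonormal families in ℝ^{m}, and let (v_i)_{i=1}^{n} and (v'_j)_{j=1}^{n'} be orthonormal families in ℝ^{m'}. Then for any subsets S ⊆ {1,…,n} and T ⊆ {1,…,n'}, | Σ_{i∈S} Σ_{j∈T} (u_i·u'_j)(v_i·v'_j) | ≤ min(|S|, |T|). -/
open Matrix

lemma dotP_sum {k m : ℕ} (x : Fin m → ℝ) (T : Finset (Fin k)) (f : Fin k → Fin m → ℝ) :
    x ⬝ᵥ (∑ j ∈ T, f j) = ∑ j ∈ T, x ⬝ᵥ f j := by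
  simp only [dotProduct, Finset.sum_apply, Finset.mul_sum]
  exact Finset.sum_comm

lemma sum_dotP {k m : ℕ} (x : Fin m → ℝ) (T : Finset (Fin k)) (f : Fin k → Fin m → ℝ) :
    (∑ j ∈ T, f j) ⬝ᵥ x = ∑ j ∈ T, f j ⬝ᵥ x := by
  rw [dotProduct_comm, dotP_sum]
  exact Finset.sum_congr rfl fun j _ => dotProduct_comm _ _

lemma bessel {k m : ℕ} (w : Fin k → Fin m → ℝ)
    (hw : ∀ i j, w i ⬝ᵥ w j = if i = j then 1 else 0)
    (x : Fin m → ℝ) (hx : x ⬝ᵥ x = 1) (T : Finset (Fin k)) :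
    ∑ j ∈ T, (x ⬝ᵥ w j) ^ 2 ≤ 1 := by
  set s : Fin m → ℝ := ∑ j ∈ T, (x ⬝ᵥ w j) • w j with hs
  have h0 : 0 ≤ (x - s) ⬝ᵥ (x - s) := Finset.sum_nonneg fun i _ => mul_self_nonneg _
  have hxs : x ⬝ᵥ s = ∑ j ∈ T, (x ⬝ᵥ w j) ^ 2 := by
    rw [hs, dotP_sum]
    exact Finset.sum_congr rfl fun j _ => by rw [dotProduct_smul, smul_eq_mul]; ring
  have hsx : s ⬝ᵥ x = ∑ j ∈ T, (x ⬝ᵥ w j) ^ 2 := by rw [dotProduct_comm, hxs]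
  have hss : s ⬝ᵥ s = ∑ j ∈ T, (x ⬝ᵥ w j) ^ 2 := by
    rw [hs, sum_dotP]
    refine Finset.sum_congr rfl fun j hj => ?_
    rw [smul_dotProduct, smul_eq_mul, dotP_sum]
    rw [Finset.sum_eq_single j (fun b hb hbj => by
          rw [dotProduct_smul, smul_eq_mul, hw j b, if_neg (fun h => hbj h.symm), mul_zero])
        (fun h => absurd hj h)]
    rw [dotProduct_smul, smul_eq_mul, hw j j, if_pos rfl, mul_one]
    ring
  have hrr : (x - s) ⬝ᵥ (x - s) = 1 - ∑ j ∈ T, (x ⬝ᵥ w j) ^ 2 := by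
    rw [sub_dotProduct, dotProduct_sub, dotProduct_sub, hx, hxs, hsx, hss]
    ring
  linarith

lemma inner_bound {k m m' : ℕ} (w : Fin k → Fin m → ℝ) (z : Fin k → Fin m' → ℝ)
    (hw : ∀ i j, w i ⬝ᵥ w j = if i = j then 1 else 0)
    (hz : ∀ i j, z i ⬝ᵥ z j = if i = j then 1 else 0)
    (x : Fin m → ℝ) (y : Fin m' → ℝ) (hx : x ⬝ᵥ x = 1) (hy : y ⬝ᵥ y = 1)
    (T : Finset (Fin k)) :
    |∑ j ∈ T, (x ⬝ᵥ w j) * (y ⬝ᵥ z j)| ≤ 1 := by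
  have h1 := bessel w hw x hx T
  have h2 := bessel z hz y hy T
  have h3 := Finset.sum_mul_sq_le_sq_mul_sq T (fun j => x ⬝ᵥ w j) (fun j => y ⬝ᵥ z j)
  have h4 : (∑ j ∈ T, (x ⬝ᵥ w j) * (y ⬝ᵥ z j)) ^ 2 ≤ 1 := by
    calc _ ≤ (∑ j ∈ T, (x ⬝ᵥ w j) ^ 2) * ∑ j ∈ T, (y ⬝ᵥ z j) ^ 2 := h3
    _ ≤ 1 := by
        have := Finset.sum_nonneg (fun j (_ : j ∈ T) => sq_nonneg (x ⬝ᵥ w j))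
        have := Finset.sum_nonneg (fun j (_ : j ∈ T) => sq_nonneg (y ⬝ᵥ z j))
        nlinarith
  nlinarith [abs_nonneg (∑ j ∈ T, (x ⬝ᵥ w j) * (y ⬝ᵥ z j)),
    sq_abs (∑ j ∈ T, (x ⬝ᵥ w j) * (y ⬝ᵥ z j))]

/-- For orthonormal families `(u_i)_{i=1}^n`, `(u'_j)_{j=1}^{n'}` in ℝ^m and
`(v_i)_{i=1}^n`, `(v'_j)_{j=1}^{n'}` in ℝ^{m'}, and any subsets `S`, `T` of the index sets,
`|Σ_{i∈S} Σ_{j∈T} (u_i·u'_j)(v_i·v'_j)| ≤ min(|S|, |T|)`. -/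
theorem stmt10 {m m' n n' : ℕ}
    (u : Fin n → Fin m → ℝ) (u' : Fin n' → Fin m → ℝ)
    (v : Fin n → Fin m' → ℝ) (v' : Fin n' → Fin m' → ℝ)
    (hu : ∀ i j, u i ⬝ᵥ u j = if i = j then 1 else 0)
    (hu' : ∀ i j, u' i ⬝ᵥ u' j = if i = j then 1 else 0)
    (hv : ∀ i j, v i ⬝ᵥ v j = if i = j then 1 else 0)
    (hv' : ∀ i j, v' i ⬝ᵥ v' j = if i = j then 1 else 0)
    (S : Finset (Fin n)) (T : Finset (Fin n')) :
    |∑ i ∈ S, ∑ j ∈ T, (u i ⬝ᵥ u' j) * (v i ⬝ᵥ v' j)| ≤ ((min S.card T.card : ℕ) : ℝ) := by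
  rw [Nat.cast_min]
  apply le_min
  · calc |∑ i ∈ S, ∑ j ∈ T, (u i ⬝ᵥ u' j) * (v i ⬝ᵥ v' j)|
        ≤ ∑ i ∈ S, |∑ j ∈ T, (u i ⬝ᵥ u' j) * (v i ⬝ᵥ v' j)| := Finset.abs_sum_le_sum_abs _ _
      _ ≤ ∑ _i ∈ S, (1 : ℝ) := by
          apply Finset.sum_le_sum
          intro i _
          exact inner_bound u' v' hu' hv' (u i) (v i) (by simpa using hu i i) (by simpa using hv i i) T
      _ = S.card := by simp
  · rw [Finset.sum_comm]
    calc |∑ j ∈ T, ∑ i ∈ S, (u i ⬝ᵥ u' j) * (v i ⬝ᵥ v' j)|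
        ≤ ∑ j ∈ T, |∑ i ∈ S, (u i ⬝ᵥ u' j) * (v i ⬝ᵥ v' j)| := Finset.abs_sum_le_sum_abs _ _
      _ ≤ ∑ _j ∈ T, (1 : ℝ) := by
          apply Finset.sum_le_sum
          intro j _
          have : ∀ i, (u i ⬝ᵥ u' j) * (v i ⬝ᵥ v' j) = (u' j ⬝ᵥ u i) * (v' j ⬝ᵥ v i) := by
            intro i; rw [dotProduct_comm, dotProduct_comm (v i)]
          simp only [this]
          exact inner_bound u v hu hv (u' j) (v' j) (by simpa using hu' j j) (by simpa using hv' j j) S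
      _ = T.card := by simp
end

section
/- Let m, N be positive integers, let Q ∈ ℂ^{N×N} be unitary, and let (e_w)_{w=1}^{N} be the standard basis of ℂ^{N}. Suppose M^{(a)} = Σ_{w=1}^{N} Σ_{i=1}^{m} (u^{(a)}_{w,i} ⊗ Q^{*} e_w) s^{(a)}_{w,i} (v^{(a)}_{w,i} ⊗ Q^{*} e_w)^{*} and M^{(b)} = Σ_{w=1}^{N} Σ_{j=1}^{m} (u^{(b)}_{w,j} ⊗ Q^{*} e_w) s^{(b)}_{w,j} (v^{(b)}_{w,j} ⊗ Q^{*} e_w)^{*}, where s^{(a)}_{w,i}, s^{(b)}_{w,j} ≥ 0 and, for each w, (u^{(a)}_{w,i})_i, (v^{(a)}_{w,i})_i, (u^{(b)}_{w,j})_j, (v^{(b)}_{w,j})_j are orthonormal families in ℂ^{m}. Then for all permutation matrices P, P' ∈ ℝ^{m×m} (regarded as complex matrices), ‖M^{(a)} − (P ⊗ I_N) M^{(b)} (P' ⊗ I_N)^⊤‖² = ‖M^{(a)}‖² + ‖M^{(b)}‖² − 2 Re Σ_{w=1}^{N} Σ_{i=1}^{m} Σ_{j=1}^{m} s^{(a)}_{w,i}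 s^{(b)}_{w,j} \overline{(u^{(a)}_{w,i})^{*}(P u^{(b)}_{w,j})} (v^{(a)}_{w,i})^{*}(P' v^{(b)}_{w,j}). Consequently, a pair (P, P') minimizes ‖M^{(a)} − (P ⊗ I_N) M^{(b)} (P' ⊗ I_N)^⊤‖ over pairs of permutation matrices if and only if it maximizes Re Σ_{w,i,j} s^{(a)}_{w,i} s^{(b)}_{w,j} \overline{(u^{(a)}_{w,i})^{*}(P u^{(b)}_{w,j})} (v^{(a)}_{w,i})^{*}(P' v^{(b)}_{w,j}). -/
open Matrix
open scoped Kronecker ComplexConjugate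

/-- A permutation matrix: a 0-1 matrix with exactly one 1 in each row and each column. -/
def IsPermMatrix {k : ℕ} (P : Matrix (Fin k) (Fin k) ℝ) : Prop :=
  (∀ i j, P i j = 0 ∨ P i j = 1) ∧ (∀ i, ∃! j, P i j = 1) ∧ (∀ j, ∃! i, P i j = 1)

/-- The outer product `a b*` of two complex vectors: entry `(i, j)` is `a i * conj (b j)`. -/
noncomputable def outerC {α β : Type*} (a : α → ℂ) (b : β → ℂ) : Matrix α β ℂ :=
  Matrix.of fun i j => a i * conj (b j)

/-- The Kronecker product `a ⊗ b` of two vectors (regarded as one-column matrices). -/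
def kronVec {α β : Type*} (a : α → ℂ) (b : β → ℂ) : α × β → ℂ := fun p => a p.1 * b p.2

/-- A real matrix regarded as a complex matrix. -/
def toC {k : ℕ} (P : Matrix (Fin k) (Fin k) ℝ) : Matrix (Fin k) (Fin k) ℂ :=
  P.map Complex.ofReal

/-- The Hermitian inner product `a* b = Σ_i conj (a i) * b i` on ℂ^k. -/
noncomputable def sdotC {k : ℕ} (a b : Fin k → ℂ) : ℂ := ∑ i, conj (a i) * b i

/-- Frobenius norm squared of a complex matrix: `Σ_{i,j} |A_{ij}|²`. -/
noncomputable def frobC2 {α β : Type*} [Fintype α] [Fintype β] (A : Matrix α β ℂ) : ℝ :=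
  ∑ i, ∑ j, Complex.normSq (A i j)

/-!
Expanding the square gives `‖Mᵃ - X‖² = ‖Mᵃ‖² + ‖X‖² - 2 Re tr (X* Mᵃ)` for
`X = (P ⊗ I) Mᵇ (P' ⊗ I)ᵀ`. Real permutation matrices are unitary, hence so are `P ⊗ I` and
`P' ⊗ I`, and `‖X‖ = ‖Mᵇ‖`. Moreover these factors act on each rank-one term
`(u ⊗ q_w)(v ⊗ q_w)*` of `Mᵇ` through the first tensor factor only, turning it into
`(P u ⊗ q_w)(P' v ⊗ q_w)*`. As the vectors `q_w = Q* e_w` are orthonormal, terms of `Mᵃ` and `X`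
with different `w` are orthogonal for the trace inner product, and the remaining pairs contribute
`conj (uᵃ* P uᵇ) (vᵃ* P' vᵇ)`. Since `‖Mᵃ‖² + ‖Mᵇ‖²` does not depend on `(P, P')`, minimising the
distance is the same as maximising the real part of the cross term.
-/

section Frobenius

variable {α β : Type*} [Fintype α] [Fintype β]

lemma frobC2_nonneg (A : Matrix α β ℂ) : 0 ≤ frobC2 A :=
  Finset.sum_nonneg fun _ _ => Finset.sum_nonneg fun _ _ => Complex.normSq_nonneg _

lemma frobC2_eq_re_trace (A : Matrix α β ℂ) : frobC2 A = (Aᴴ * A).trace.re := by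
  simp only [frobC2, trace, diag_apply, mul_apply, conjTranspose_apply, Complex.re_sum]
  rw [Finset.sum_comm]
  refine Finset.sum_congr rfl fun i _ => Finset.sum_congr rfl fun j _ => ?_
  rw [Complex.star_def, ← Complex.normSq_eq_conj_mul_self, Complex.ofReal_re]

lemma frobC2_sub (A B : Matrix α β ℂ) :
    frobC2 (A - B) = frobC2 A + frobC2 B - 2 * (Bᴴ * A).trace.re := by
  simp only [frobC2, Matrix.sub_apply, Complex.normSq_sub, Finset.sum_sub_distrib,
    Finset.sum_add_distrib, trace, diag_apply, mul_apply, conjTranspose_apply, Complex.re_sum,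
    Finset.mul_sum]
  rw [Finset.sum_comm (f := fun j i => 2 * (star (B i j) * A i j).re)]
  simp only [Complex.star_def, mul_comm (conj _)]

lemma frobC2_mul_mul_conjTranspose [DecidableEq α] [DecidableEq β] {U : Matrix α α ℂ}
    {V : Matrix β β ℂ} (hU : U ∈ unitaryGroup α ℂ) (hV : V ∈ unitaryGroup β ℂ)
    (A : Matrix α β ℂ) : frobC2 (U * A * Vᴴ) = frobC2 A := by
  rw [mem_unitaryGroup_iff', star_eq_conjTranspose] at hU hV
  rw [frobC2_eq_re_trace, frobC2_eq_re_trace, conjTranspose_mul, conjTranspose_mul,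
    conjTranspose_conjTranspose]
  calc (V * (Aᴴ * Uᴴ) * (U * A * Vᴴ)).trace.re
      = (V * (Aᴴ * (Uᴴ * U) * A) * Vᴴ).trace.re := by simp only [Matrix.mul_assoc]
    _ = (Vᴴ * V * (Aᴴ * A)).trace.re := by
      rw [hU, Matrix.mul_one, trace_mul_comm, Matrix.mul_assoc]
    _ = (Aᴴ * A).trace.re := by rw [hV, Matrix.one_mul]

end Frobenius

lemma star_mulVec_dotProduct_mulVec {α β : Type*} [Fintype α] [Fintype β] [DecidableEq β]
    {A : Matrix α β ℂ} (hA : Aᴴ * A = 1) (x y : β → ℂ) :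
    star (A *ᵥ x) ⬝ᵥ (A *ᵥ y) = star x ⬝ᵥ y := by
  rw [star_mulVec, ← dotProduct_mulVec, mulVec_mulVec, hA, one_mulVec]

lemma star_conjTranspose_mulVec_single_dotProduct {n : Type*} [Fintype n] [DecidableEq n]
    {Q : Matrix n n ℂ} (hQ : Qᴴ * Q = 1) (w w' : n) :
    star (Qᴴ *ᵥ Pi.single w 1) ⬝ᵥ (Qᴴ *ᵥ Pi.single w' 1) = if w = w' then 1 else 0 := by
  rw [star_mulVec_dotProduct_mulVec (by rw [conjTranspose_conjTranspose, mul_eq_one_comm.mp hQ])]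
  simp [Pi.single_apply, eq_comm]

lemma IsPermMatrix.transpose_mul_self {k : ℕ} {P : Matrix (Fin k) (Fin k) ℝ}
    (hP : IsPermMatrix P) : Pᵀ * P = 1 := by
  obtain ⟨h01, hrow, hcol⟩ := hP
  ext j j'
  obtain ⟨i₀, hi₀, hi₀u⟩ := hcol j
  have hcol0 : ∀ i ≠ i₀, P i j = 0 := fun i hi => (h01 i j).resolve_right (mt (hi₀u i) hi)
  have hrow0 : P i₀ j' = if j = j' then 1 else 0 := by
    split_ifs with h
    · exact h ▸ hi₀
    · exact (h01 i₀ j').resolve_right fun h1 => h ((hrow i₀).unique hi₀ h1)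
  rw [mul_apply, Finset.sum_eq_single i₀ (fun i _ hi => by simp [hcol0 i hi]) (by simp),
    transpose_apply, hi₀, one_mul, hrow0, one_apply]

lemma conjTranspose_toC {k : ℕ} (P : Matrix (Fin k) (Fin k) ℝ) : (toC P)ᴴ = (toC P)ᵀ := by
  ext i j
  simp [toC]

lemma IsPermMatrix.toC_mem_unitaryGroup {k : ℕ} {P : Matrix (Fin k) (Fin k) ℝ}
    (hP : IsPermMatrix P) : toC P ∈ unitaryGroup (Fin k) ℂ := by
  have h := congr_arg Complex.ofRealHom.mapMatrix hP.transpose_mul_self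
  rw [map_mul, map_one] at h
  rwa [mem_unitaryGroup_iff', star_eq_conjTranspose, conjTranspose_toC, toC, ← transpose_map]

lemma transpose_toC_kronecker_one {k : ℕ} {n : Type*} [DecidableEq n]
    (P : Matrix (Fin k) (Fin k) ℝ) :
    (toC P ⊗ₖ (1 : Matrix n n ℂ))ᵀ = (toC P ⊗ₖ (1 : Matrix n n ℂ))ᴴ := by
  rw [conjTranspose_kronecker, conjTranspose_toC, conjTranspose_one, ← kroneckerMap_transpose,
    transpose_one]

lemma outerC_eq_vecMulVec {α β : Type*} (a : α → ℂ) (b : β → ℂ) :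
    outerC a b = vecMulVec a (star b) := rfl

section KronOuterSum

variable {α β : Type*} [Fintype α] [Fintype β]

lemma mul_outerC_mul_conjTranspose (U : Matrix α α ℂ) (V : Matrix β β ℂ) (a : α → ℂ)
    (b : β → ℂ) : U * outerC a b * Vᴴ = outerC (U *ᵥ a) (V *ᵥ b) := by
  rw [outerC_eq_vecMulVec, outerC_eq_vecMulVec, mul_vecMulVec, vecMulVec_mul, star_mulVec]

lemma trace_conjTranspose_outerC_mul_outerC (a c : α → ℂ) (b d : β → ℂ) :
    ((outerC a b)ᴴ * outerC c d).trace = (star a ⬝ᵥ c) * (star d ⬝ᵥ b) := by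
  rw [outerC_eq_vecMulVec, outerC_eq_vecMulVec, conjTranspose_vecMulVec, star_star,
    vecMulVec_mul_vecMulVec, trace_vecMulVec, dotProduct_smul, smul_eq_mul, dotProduct_comm b]

lemma kronecker_one_mulVec_kronVec [DecidableEq β] (A : Matrix α α ℂ) (u : α → ℂ)
    (q : β → ℂ) : (A ⊗ₖ (1 : Matrix β β ℂ)) *ᵥ kronVec u q = kronVec (A *ᵥ u) q := by
  ext ⟨i, w⟩
  simp [mulVec, dotProduct, kronVec, Fintype.sum_prod_type, one_apply, Finset.sum_mul,
    mul_assoc]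

lemma star_kronVec_dotProduct_kronVec (a b : α → ℂ) (q q' : β → ℂ) :
    star (kronVec a q) ⬝ᵥ kronVec b q' = (star a ⬝ᵥ b) * (star q ⬝ᵥ q') := by
  simp only [dotProduct, kronVec, Pi.star_apply, star_mul', Fintype.sum_prod_type,
    Finset.sum_mul_sum, mul_mul_mul_comm]

variable {ι κ : Type*} [Fintype ι] [Fintype κ]

noncomputable def kronOuterSum (q : ι → β → ℂ) (s : ι → κ → ℝ) (u v : ι → κ → α → ℂ) :
    Matrix (α × β) (α × β) ℂ :=
  ∑ w, ∑ i, (s w i : ℂ) • outerC (kronVec (u w i) (q w)) (kronVec (v w i) (q w))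

lemma kronecker_one_mul_kronOuterSum_mul_conjTranspose [DecidableEq β] (A B : Matrix α α ℂ)
    (q : ι → β → ℂ) (s : ι → κ → ℝ) (u v : ι → κ → α → ℂ) :
    (A ⊗ₖ (1 : Matrix β β ℂ)) * kronOuterSum q s u v * (B ⊗ₖ (1 : Matrix β β ℂ))ᴴ
      = kronOuterSum q s (fun w i => A *ᵥ u w i) (fun w i => B *ᵥ v w i) := by
  simp only [kronOuterSum, Finset.mul_sum, Finset.sum_mul, Matrix.mul_smul, Matrix.smul_mul,
    mul_outerC_mul_conjTranspose, kronecker_one_mulVec_kronVec]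

lemma trace_conjTranspose_kronOuterSum_mul_kronOuterSum [DecidableEq ι] {q : ι → β → ℂ}
    (hq : ∀ w w', star (q w) ⬝ᵥ q w' = if w = w' then 1 else 0) (s t : ι → κ → ℝ)
    (u v x y : ι → κ → α → ℂ) :
    ((kronOuterSum q t x y)ᴴ * kronOuterSum q s u v).trace
      = ∑ w, ∑ i, ∑ j, (s w i : ℂ) * (t w j : ℂ) * conj (star (u w i) ⬝ᵥ x w j)
          * (star (v w i) ⬝ᵥ y w j) := by
  simp only [kronOuterSum, conjTranspose_sum, conjTranspose_smul, Finset.sum_mul,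
    Finset.mul_sum, Matrix.smul_mul, Matrix.mul_smul, trace_sum, trace_smul,
    trace_conjTranspose_outerC_mul_outerC, star_kronVec_dotProduct_kronVec, hq]
  simp only [smul_eq_mul, mul_ite, ite_mul, mul_one, mul_zero, zero_mul, Finset.sum_ite_irrel,
    Finset.sum_const_zero, Finset.sum_ite_eq, Finset.mem_univ, if_true]
  refine Fintype.sum_congr _ _ fun w => Fintype.sum_congr _ _ fun i =>
    Fintype.sum_congr _ _ fun j => ?_
  rw [star_dotProduct (x w j), Complex.star_def, Complex.conj_ofReal]
  ring

theorem frobC2_kronOuterSum_sub_kronecker_one_mul_kronOuterSum_mul [DecidableEq α]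
    [DecidableEq β] [DecidableEq ι] {q : ι → β → ℂ}
    (hq : ∀ w w', star (q w) ⬝ᵥ q w' = if w = w' then 1 else 0) {A B : Matrix α α ℂ}
    (hA : A ∈ unitaryGroup α ℂ) (hB : B ∈ unitaryGroup α ℂ) (s t : ι → κ → ℝ)
    (u v x y : ι → κ → α → ℂ) :
    frobC2 (kronOuterSum q s u v
        - (A ⊗ₖ (1 : Matrix β β ℂ)) * kronOuterSum q t x y * (B ⊗ₖ (1 : Matrix β β ℂ))ᴴ)
      = frobC2 (kronOuterSum q s u v) + frobC2 (kronOuterSum q t x y)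
        - 2 * (∑ w, ∑ i, ∑ j, (s w i : ℂ) * (t w j : ℂ) * conj (star (u w i) ⬝ᵥ (A *ᵥ x w j))
          * (star (v w i) ⬝ᵥ (B *ᵥ y w j))).re := by
  have hI : (1 : Matrix β β ℂ) ∈ unitaryGroup β ℂ := one_mem _
  rw [frobC2_sub, frobC2_mul_mul_conjTranspose (kronecker_mem_unitary hA hI)
    (kronecker_mem_unitary hB hI), kronecker_one_mul_kronOuterSum_mul_conjTranspose,
    trace_conjTranspose_kronOuterSum_mul_kronOuterSum hq]

end KronOuterSum

theorem stmt14_general {m N : ℕ} (Q : Matrix (Fin N) (Fin N) ℂ) (hQ : Qᴴ * Q = 1)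
    (e : Fin N → Fin N → ℂ) (he : ∀ w j, e w j = if j = w then 1 else 0)
    (sa sb : Fin N → Fin m → ℝ)
    (ua va ub vb : Fin N → Fin m → Fin m → ℂ)
    (Ma Mb : Matrix (Fin m × Fin N) (Fin m × Fin N) ℂ)
    (hMa : Ma = ∑ w, ∑ i, (sa w i : ℂ) •
        outerC (kronVec (ua w i) (Qᴴ *ᵥ e w)) (kronVec (va w i) (Qᴴ *ᵥ e w)))
    (hMb : Mb = ∑ w, ∑ j, (sb w j : ℂ) •
        outerC (kronVec (ub w j) (Qᴴ *ᵥ e w)) (kronVec (vb w j) (Qᴴ *ᵥ e w))) :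
    (∀ P P' : Matrix (Fin m) (Fin m) ℝ, IsPermMatrix P → IsPermMatrix P' →
      frobC2 (Ma - (toC P ⊗ₖ (1 : Matrix (Fin N) (Fin N) ℂ)) * Mb
          * (toC P' ⊗ₖ (1 : Matrix (Fin N) (Fin N) ℂ))ᵀ)
        = frobC2 Ma + frobC2 Mb
          - 2 * (∑ w, ∑ i, ∑ j, (sa w i : ℂ) * (sb w j : ℂ) *
              conj (sdotC (ua w i) (toC P *ᵥ ub w j))
                * sdotC (va w i) (toC P' *ᵥ vb w j)).re)
    ∧ (∀ P P' : Matrix (Fin m) (Fin m) ℝ, IsPermMatrix P → IsPermMatrix P' →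
        ((∀ R R' : Matrix (Fin m) (Fin m) ℝ, IsPermMatrix R → IsPermMatrix R' →
            Real.sqrt (frobC2 (Ma - (toC P ⊗ₖ (1 : Matrix (Fin N) (Fin N) ℂ)) * Mb
                * (toC P' ⊗ₖ (1 : Matrix (Fin N) (Fin N) ℂ))ᵀ))
              ≤ Real.sqrt (frobC2 (Ma - (toC R ⊗ₖ (1 : Matrix (Fin N) (Fin N) ℂ)) * Mb
                * (toC R' ⊗ₖ (1 : Matrix (Fin N) (Fin N) ℂ))ᵀ)))
          ↔ (∀ R R' : Matrix (Fin m) (Fin m) ℝ, IsPermMatrix R → IsPermMatrix R' →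
              (∑ w, ∑ i, ∑ j, (sa w i : ℂ) * (sb w j : ℂ) *
                  conj (sdotC (ua w i) (toC R *ᵥ ub w j))
                    * sdotC (va w i) (toC R' *ᵥ vb w j)).re
                ≤ (∑ w, ∑ i, ∑ j, (sa w i : ℂ) * (sb w j : ℂ) *
                  conj (sdotC (ua w i) (toC P *ᵥ ub w j))
                    * sdotC (va w i) (toC P' *ᵥ vb w j)).re))) := by
  obtain rfl : e = fun w => Pi.single w 1 :=
    funext₂ fun w j => (he w j).trans (Pi.single_apply ..).symm
  refine (fun key => ⟨key, fun P P' hP hP' => ?_⟩) fun P P' hP hP' => ?_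
  · rw [transpose_toC_kronecker_one, hMa, hMb]
    exact frobC2_kronOuterSum_sub_kronecker_one_mul_kronOuterSum_mul
      (star_conjTranspose_mulVec_single_dotProduct hQ) hP.toC_mem_unitaryGroup
      hP'.toC_mem_unitaryGroup _ _ _ _ _ _
  · refine forall₂_congr fun R R' => forall₂_congr fun hR hR' => ?_
    rw [Real.sqrt_le_sqrt_iff (frobC2_nonneg _), key P P' hP hP', key R R' hR hR']
    constructor <;> intro h <;> linarith

/-- With `M^{(a)} = Σ_{w,i} (u^a_{w,i} ⊗ Q* e_w) s^a_{w,i} (v^a_{w,i} ⊗ Q* e_w)*`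
and `M^{(b)} = Σ_{w,j} (u^b_{w,j} ⊗ Q* e_w) s^b_{w,j} (v^b_{w,j} ⊗ Q* e_w)*` (where `Q` is
unitary, `s ≥ 0`, all per-`w` families orthonormal in ℂ^m), for all permutation matrices
`P, P'`:
`‖M^a − (P ⊗ I_N) M^b (P' ⊗ I_N)ᵀ‖² = ‖M^a‖² + ‖M^b‖²
  − 2 Re Σ_{w,i,j} s^a_{w,i} s^b_{w,j} conj((u^a_{w,i})* P u^b_{w,j}) (v^a_{w,i})* P' v^b_{w,j}`,
and consequently a pair `(P, P')` minimizes `‖M^a − (P ⊗ I_N) M^b (P' ⊗ I_N)ᵀ‖` over pairs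
of permutation matrices iff it maximizes the `Re Σ …` objective. -/
theorem stmt14 {m N : ℕ} (hm : 0 < m) (hN : 0 < N)
    (Q : Matrix (Fin N) (Fin N) ℂ) (hQ : Qᴴ * Q = 1)
    (e : Fin N → Fin N → ℂ) (he : ∀ w j, e w j = if j = w then 1 else 0)
    (sa sb : Fin N → Fin m → ℝ) (hsa : ∀ w i, 0 ≤ sa w i) (hsb : ∀ w j, 0 ≤ sb w j)
    (ua va ub vb : Fin N → Fin m → Fin m → ℂ)
    (hua : ∀ w i j, sdotC (ua w i) (ua w j) = if i = j then 1 else 0)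
    (hva : ∀ w i j, sdotC (va w i) (va w j) = if i = j then 1 else 0)
    (hub : ∀ w i j, sdotC (ub w i) (ub w j) = if i = j then 1 else 0)
    (hvb : ∀ w i j, sdotC (vb w i) (vb w j) = if i = j then 1 else 0)
    (Ma Mb : Matrix (Fin m × Fin N) (Fin m × Fin N) ℂ)
    (hMa : Ma = ∑ w, ∑ i, (sa w i : ℂ) •
        outerC (kronVec (ua w i) (Qᴴ *ᵥ e w)) (kronVec (va w i) (Qᴴ *ᵥ e w)))
    (hMb : Mb = ∑ w, ∑ j, (sb w j : ℂ) •
        outerC (kronVec (ub w j) (Qᴴ *ᵥ e w)) (kronVec (vb w j) (Qᴴ *ᵥ e w))) :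
    (∀ P P' : Matrix (Fin m) (Fin m) ℝ, IsPermMatrix P → IsPermMatrix P' →
      frobC2 (Ma - (toC P ⊗ₖ (1 : Matrix (Fin N) (Fin N) ℂ)) * Mb
          * (toC P' ⊗ₖ (1 : Matrix (Fin N) (Fin N) ℂ))ᵀ)
        = frobC2 Ma + frobC2 Mb
          - 2 * (∑ w, ∑ i, ∑ j, (sa w i : ℂ) * (sb w j : ℂ) *
              conj (sdotC (ua w i) (toC P *ᵥ ub w j))
                * sdotC (va w i) (toC P' *ᵥ vb w j)).re)
    ∧ (∀ P P' : Matrix (Fin m) (Fin m) ℝ, IsPermMatrix P → IsPermMatrix P' →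
        ((∀ R R' : Matrix (Fin m) (Fin m) ℝ, IsPermMatrix R → IsPermMatrix R' →
            Real.sqrt (frobC2 (Ma - (toC P ⊗ₖ (1 : Matrix (Fin N) (Fin N) ℂ)) * Mb
                * (toC P' ⊗ₖ (1 : Matrix (Fin N) (Fin N) ℂ))ᵀ))
              ≤ Real.sqrt (frobC2 (Ma - (toC R ⊗ₖ (1 : Matrix (Fin N) (Fin N) ℂ)) * Mb
                * (toC R' ⊗ₖ (1 : Matrix (Fin N) (Fin N) ℂ))ᵀ)))
          ↔ (∀ R R' : Matrix (Fin m) (Fin m) ℝ, IsPermMatrix R → IsPermMatrix R' →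
              (∑ w, ∑ i, ∑ j, (sa w i : ℂ) * (sb w j : ℂ) *
                  conj (sdotC (ua w i) (toC R *ᵥ ub w j))
                    * sdotC (va w i) (toC R' *ᵥ vb w j)).re
                ≤ (∑ w, ∑ i, ∑ j, (sa w i : ℂ) * (sb w j : ℂ) *
                  conj (sdotC (ua w i) (toC P *ᵥ ub w j))
                    * sdotC (va w i) (toC P' *ᵥ vb w j)).re))) :=
  stmt14_general Q hQ e he sa sb ua va ub vb Ma Mb hMa hMb
end
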